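/- Let (x,y,z) ∈ 𝓗 with x, z ≥ 0, 0 ≤ y ≤ x, x ≥ √z, and xy ≥ z. Then ℓ_X(x,y,z) = x + y. -/

import Mathlib

open scoped commutatorElement

/-- The two generators `a, b` of the discrete Heisenberg group. -/
inductive HGen : Type
  | a | b
deriving DecidableEq

/-- Relators of the discrete Heisenberg group `⟨a,b ∣ [a,[a,b]] = [b,[a,b]] = 1⟩`. -/
def Hrels : Set (FreeGroup HGen) :=
  { ⁅FreeGroup.of HGen.a, ⁅FreeGroup.of HGen.a, FreeGroup.of HGen.b⁆⁆,
    ⁅FreeGroup.of HGen.b, ⁅FreeGroup.of HGen.a, FreeGroup.of HGen.b⁆⁆ }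

/-- The discrete Heisenberg group `𝓗`. -/
abbrev Heis : Type := PresentedGroup Hrels

/-- The generator `a` of `𝓗`. -/
def Ha : Heis := PresentedGroup.of HGen.a

/-- The generator `b` of `𝓗`. -/
def Hb : Heis := PresentedGroup.of HGen.b

/-- The four letters of the alphabet `X = {a, a⁻¹, b, b⁻¹}`. -/
inductive XLetter : Type
  | a | A | b | B
deriving DecidableEq

/-- The element of `𝓗` represented by a letter of `X`. -/
def XLetter.toH : XLetter → Heis
  | .a => Ha
  | .A => Ha⁻¹
  | .b => Hb
  | .B => Hb⁻¹

/-- The element of `𝓗` represented by a word over `X`. -/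
def evalX (w : List XLetter) : Heis := (w.map XLetter.toH).prod

/-- The word `a^k` over `X`, for `k ∈ ℤ`. -/
def apow (k : ℤ) : List XLetter :=
  if 0 ≤ k then List.replicate k.toNat XLetter.a else List.replicate (-k).toNat XLetter.A

/-- The word `b^k` over `X`, for `k ∈ ℤ`. -/
def bpow (k : ℤ) : List XLetter :=
  if 0 ≤ k then List.replicate k.toNat XLetter.b else List.replicate (-k).toNat XLetter.B

/-- The element `(x,y,z)` of `𝓗`, i.e. the element with normal form `[a,b]^z b^y a^x`. -/
def hElt (x y z : ℤ) : Heis := ⁅Ha, Hb⁆ ^ z * Hb ^ y * Ha ^ x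

/-- The word length `ℓ_X(g)` of `g ∈ 𝓗` with respect to `X`. -/
noncomputable def lenX (g : Heis) : ℕ :=
  sInf { n | ∃ w : List XLetter, evalX w = g ∧ w.length = n }

/-- A word over `X` is geodesic if its length equals the word length of the
element it represents. -/
def IsGeodesicX (w : List XLetter) : Prop := w.length = lenX (evalX w)

/-! The lower bound comes from abelianising: each letter of `X` changes the exponent sums
`(x, y)` by a unit vector, so every word for `(x,y,z)` has length at least `|x| + |y|`.
For the upper bound, a word with `x` letters `a`, `y` letters `b` and no inverses represents
`(x, y, z)` where `z` counts the pairs of an `a` standing before a `b`; every `z` with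
`0 ≤ z ≤ xy` is attained. -/

theorem pow_mul_eq_of_mul_eq {G : Type*} [Group G] {a b c : G} (habc : a * b = c * b * a)
    (hac : Commute a c) (n : ℕ) : a ^ n * b = c ^ n * b * a ^ n := by
  induction n with
  | zero => simp
  | succ n ih =>
    calc a ^ (n + 1) * b = a * (a ^ n * b) := by group
      _ = c ^ n * (a * b) * a ^ n := by
        rw [ih, ← mul_assoc, ← mul_assoc, (hac.pow_right n).eq]; group
      _ = c ^ (n + 1) * b * a ^ (n + 1) := by rw [habc]; group

theorem commute_Ha_commutatorElement : Commute Ha ⁅Ha, Hb⁆ :=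
  commutatorElement_eq_one_iff_commute.mp <| by
    simpa [map_commutatorElement, Ha, Hb, PresentedGroup.of] using
      PresentedGroup.one_of_mem (rels := Hrels) (Set.mem_insert _ _)

theorem commute_Hb_commutatorElement : Commute Hb ⁅Ha, Hb⁆ :=
  commutatorElement_eq_one_iff_commute.mp <| by
    simpa [map_commutatorElement, Ha, Hb, PresentedGroup.of] using
      PresentedGroup.one_of_mem (rels := Hrels) (Set.mem_insert_of_mem _ rfl)

theorem Ha_pow_mul_Hb (n : ℕ) : Ha ^ n * Hb = ⁅Ha, Hb⁆ ^ n * Hb * Ha ^ n :=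
  pow_mul_eq_of_mul_eq (by rw [commutatorElement_def]; group) commute_Ha_commutatorElement n

theorem hElt_natCast (x y z : ℕ) : hElt x y z = ⁅Ha, Hb⁆ ^ z * Hb ^ y * Ha ^ x := by
  simp [hElt]

theorem evalX_append (v w : List XLetter) : evalX (v ++ w) = evalX v * evalX w := by
  simp [evalX]

theorem evalX_replicate (n : ℕ) (l : XLetter) : evalX (List.replicate n l) = l.toH ^ n := by
  simp [evalX]

theorem exists_evalX_eq_hElt_of_le_mul {x y z : ℕ} (h : z ≤ x * y) :
    ∃ w, evalX w = hElt x y z ∧ w.length = x + y := by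
  induction y generalizing z with
  | zero =>
    obtain rfl : z = 0 := by simpa using h
    exact ⟨List.replicate x .a, by simp [evalX_replicate, hElt, XLetter.toH], by simp⟩
  | succ y ih =>
    have hcb := commute_Hb_commutatorElement
    by_cases hxz : x ≤ z
    · -- put the new `b` last, behind all `x` letters `a`
      obtain ⟨k, rfl⟩ := Nat.exists_eq_add_of_le hxz
      obtain ⟨w, hw, hlen⟩ := ih (z := k) (by rw [Nat.mul_succ] at h; omega)
      refine ⟨w ++ [.b], ?_, by simp [hlen]; omega⟩
      rw [evalX_append, hw, hElt_natCast, hElt_natCast]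
      calc ⁅Ha, Hb⁆ ^ k * Hb ^ y * Ha ^ x * evalX [.b]
          = ⁅Ha, Hb⁆ ^ k * Hb ^ y * (Ha ^ x * Hb) := by simp [evalX, XLetter.toH, mul_assoc]
        _ = ⁅Ha, Hb⁆ ^ k * (Hb ^ y * ⁅Ha, Hb⁆ ^ x) * Hb * Ha ^ x := by
          rw [Ha_pow_mul_Hb]; simp only [mul_assoc]
        _ = ⁅Ha, Hb⁆ ^ (x + k) * Hb ^ (y + 1) * Ha ^ x := by
          rw [(hcb.pow_pow y x).eq]; group
    · -- put the new `b` behind exactly `z` letters `a`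
      refine ⟨List.replicate y .b ++ List.replicate z .a ++ [.b] ++ List.replicate (x - z) .a,
        ?_, by simp; omega⟩
      simp only [evalX_append, evalX_replicate, hElt_natCast]
      calc Hb ^ y * Ha ^ z * evalX [.b] * Ha ^ (x - z)
          = Hb ^ y * (Ha ^ z * Hb) * Ha ^ (x - z) := by simp [evalX, XLetter.toH, mul_assoc]
        _ = (Hb ^ y * ⁅Ha, Hb⁆ ^ z) * Hb * (Ha ^ z * Ha ^ (x - z)) := by
          rw [Ha_pow_mul_Hb]; simp only [mul_assoc]
        _ = ⁅Ha, Hb⁆ ^ z * Hb ^ (y + 1) * Ha ^ x := by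
          rw [(hcb.pow_pow y z).eq, ← pow_add, Nat.add_sub_cancel' (by omega)]; group

theorem lenX_evalX_le (w : List XLetter) : lenX (evalX w) ≤ w.length :=
  Nat.sInf_le ⟨w, rfl, rfl⟩

theorem le_lenX {g : Heis} {n : ℕ} (hg : ∃ w, evalX w = g)
    (h : ∀ w, evalX w = g → n ≤ w.length) : n ≤ lenX g := by
  obtain ⟨w, hw⟩ := hg
  exact le_csInf ⟨_, w, hw, rfl⟩ fun m ⟨v, hv, hm⟩ => hm ▸ h v hv

theorem commutatorElement_eq_one_of_commGroup {G : Type*} [CommGroup G] (g h : G) :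
    ⁅g, h⁆ = 1 :=
  commutatorElement_eq_one_iff_commute.mpr (Commute.all g h)

def exponentSums : Heis →* Multiplicative (ℤ × ℤ) :=
  PresentedGroup.toGroup (f := fun | .a => .ofAdd (1, 0) | .b => .ofAdd (0, 1)) <| by
    rintro r (rfl | rfl) <;>
      simp [commutatorElement_eq_one_of_commGroup]

theorem exponentSums_hElt (x y z : ℤ) : exponentSums (hElt x y z) = .ofAdd (x, y) := by
  simp [hElt, exponentSums, Ha, Hb, map_commutatorElement, commutatorElement_eq_one_of_commGroup,
    ← ofAdd_zsmul, ← ofAdd_add]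

theorem abs_add_abs_exponentSums_evalX_le (w : List XLetter) :
    |(exponentSums (evalX w)).toAdd.1| + |(exponentSums (evalX w)).toAdd.2| ≤ w.length := by
  induction w with
  | nil => simp [evalX]
  | cons l w ih =>
    have hl : |(exponentSums l.toH).toAdd.1| + |(exponentSums l.toH).toAdd.2| = 1 := by
      cases l <;> simp [XLetter.toH, exponentSums, Ha, Hb]
    have hcons : evalX (l :: w) = l.toH * evalX w := by simp [evalX]
    simp only [hcons, map_mul, toAdd_mul, Prod.fst_add, Prod.snd_add, List.length_cons]
    push_cast
    linarith [abs_add_le (exponentSums l.toH).toAdd.1 (exponentSums (evalX w)).toAdd.1,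
      abs_add_le (exponentSums l.toH).toAdd.2 (exponentSums (evalX w)).toAdd.2]

theorem abs_add_abs_le_length_of_evalX_eq_hElt {w : List XLetter} {x y z : ℤ}
    (hw : evalX w = hElt x y z) : |x| + |y| ≤ w.length := by
  simpa [hw, exponentSums_hElt] using abs_add_abs_exponentSums_evalX_le w

theorem lenX_case_I21_general (x y z : ℤ) (hx : 0 ≤ x) (hz : 0 ≤ z) (hy0 : 0 ≤ y)
    (hxy : z ≤ x * y) :
    (lenX (hElt x y z) : ℤ) = x + y := by
  lift x to ℕ using hx
  lift y to ℕ using hy0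
  lift z to ℕ using hz
  obtain ⟨w, hw, hlen⟩ := exists_evalX_eq_hElt_of_le_mul (by exact_mod_cast hxy)
  have hupper : lenX (hElt x y z) ≤ x + y := hw ▸ hlen ▸ lenX_evalX_le w
  have hlower : x + y ≤ lenX (hElt x y z) := le_lenX ⟨w, hw⟩ fun v hv => by
    have := abs_add_abs_le_length_of_evalX_eq_hElt hv
    rw [Nat.abs_cast, Nat.abs_cast] at this
    exact_mod_cast this
  exact_mod_cast le_antisymm hupper hlower

/-- If `x, z ≥ 0`, `0 ≤ y ≤ x`, `x ≥ √z` and `xy ≥ z`, then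
`ℓ_X(x,y,z) = x + y`. -/
theorem lenX_case_I21 (x y z : ℤ) (hx : 0 ≤ x) (hz : 0 ≤ z) (hy0 : 0 ≤ y) (hyx : y ≤ x)
    (hsqrt : Real.sqrt z ≤ (x : ℝ)) (hxy : z ≤ x * y) :
    (lenX (hElt x y z) : ℤ) = x + y :=
  lenX_case_I21_general x y z hx hz hy0 hxy
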